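/- Let ω ∈ {0,1,2}^ℕ be such that i_0(ω), i_1(ω), i_2(ω) and i_0(σω), i_1(σω), i_2(σω) are all finite, and write o(x) for the order of x ∈ Aut(T). Then o(a d_ω a c_ω) = o(a c_ω a d_ω), and this common order equals o(a d_{σω}) if ω_1 = 0, equals o(a c_{σω}) if ω_1 = 1, and equals max{o(a d_{σω}), o(a c_{σω})} if ω_1 = 2. -/

import Mathlib

namespace Grig

/-- Sequences ω ∈ {0,1,2}^ℕ (0-indexed: `ω n` is the paper's ω_{n+1}). -/
abbrev Seq := ℕ → Fin 3

/-- The shifted sequence σω. -/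
def shift (ω : Seq) : Seq := fun n => ω (n + 1)

/-- The n-fold shifted sequence σⁿω. -/
def shiftn (n : ℕ) (ω : Seq) : Seq := fun m => ω (m + n)

/-- The rooted automorphism `a`, as a map on words over {0,1} (encoded as `List Bool`). -/
def aMap : List Bool → List Bool
  | [] => []
  | x :: w => (!x) :: w

lemma aMap_invol : ∀ w, aMap (aMap w) = w := by
  intro w; cases w <;> simp [aMap]

/-- The rooted automorphism `a`. -/
def aPerm : Equiv.Perm (List Bool) := ⟨aMap, aMap, aMap_invol, aMap_invol⟩

/-- The directed automorphism with "trivial tag" `k` of the Grigorchuk group `G_ω`: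
`k = 2` gives `b_ω`, `k = 1` gives `c_ω`, `k = 0` gives `d_ω`.  Its section at the
vertex 1 is the corresponding automorphism for σω, and its section at the vertex 0
is `a` if ω₁ ≠ k and trivial if ω₁ = k. -/
def genMap (k : Fin 3) : Seq → List Bool → List Bool
  | _, [] => []
  | ω, false :: w => false :: (if ω 0 = k then w else aMap w)
  | ω, true :: w => true :: genMap k (shift ω) w

lemma genMap_invol (k : Fin 3) : ∀ (w : List Bool) (ω : Seq), genMap k ω (genMap k ω w) = w := by
  intro w
  induction w with
  | nil => intro ω; rfl
  | cons x w ih =>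
      intro ω
      cases x with
      | false => by_cases h : ω 0 = k <;> simp [genMap, h, aMap_invol]
      | true => simp [genMap, ih]

def genPerm (k : Fin 3) (ω : Seq) : Equiv.Perm (List Bool) :=
  ⟨genMap k ω, genMap k ω, fun w => genMap_invol k w ω, fun w => genMap_invol k w ω⟩

/-- The generator `b_ω`. -/
def b (ω : Seq) : Equiv.Perm (List Bool) := genPerm 2 ω
/-- The generator `c_ω`. -/
def c (ω : Seq) : Equiv.Perm (List Bool) := genPerm 1 ω
/-- The generator `d_ω`. -/
def d (ω : Seq) : Equiv.Perm (List Bool) := genPerm 0 ω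

/-- The Grigorchuk group `G_ω = ⟨a, b_ω, c_ω, d_ω⟩`, as a subgroup of the group of
permutations of the vertices of the binary rooted tree.  (Every generator preserves
word length and prefixes, so `G_ω` consists of automorphisms of the tree.) -/
def G (ω : Seq) : Subgroup (Equiv.Perm (List Bool)) :=
  Subgroup.closure {aPerm, b ω, c ω, d ω}

lemma aPerm_mem (ω : Seq) : aPerm ∈ G ω := Subgroup.subset_closure (by simp)
lemma b_mem (ω : Seq) : b ω ∈ G ω := Subgroup.subset_closure (by simp)
lemma c_mem (ω : Seq) : c ω ∈ G ω := Subgroup.subset_closure (by simp)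
lemma d_mem (ω : Seq) : d ω ∈ G ω := Subgroup.subset_closure (by simp)

/-- `a` as an element of `G_ω`. -/
def aSub (ω : Seq) : ↥(G ω) := ⟨aPerm, aPerm_mem ω⟩
/-- `b_ω` as an element of `G_ω`. -/
def bSub (ω : Seq) : ↥(G ω) := ⟨b ω, b_mem ω⟩
/-- `c_ω` as an element of `G_ω`. -/
def cSub (ω : Seq) : ↥(G ω) := ⟨c ω, c_mem ω⟩
/-- `d_ω` as an element of `G_ω`. -/
def dSub (ω : Seq) : ↥(G ω) := ⟨d ω, d_mem ω⟩

/-- The subgroup of permutations of the tree fixing every vertex of level `n`. -/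
def levelStab (n : ℕ) : Subgroup (Equiv.Perm (List Bool)) where
  carrier := {f | ∀ w : List Bool, w.length = n → f w = w}
  one_mem' := by intro w _; rfl
  mul_mem' := by
    intro f g hf hg w hw
    rw [Equiv.Perm.mul_apply, hg w hw, hf w hw]
  inv_mem' := by
    intro f hf w hw
    calc f⁻¹ w = f⁻¹ (f w) := by rw [hf w hw]
    _ = w := f.symm_apply_apply w

/-- The `n`-th level stabiliser `St_{G_ω}(n)` (as a subgroup of the ambient
permutation group). -/
def St (ω : Seq) (n : ℕ) : Subgroup (Equiv.Perm (List Bool)) := G ω ⊓ levelStab n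

/-- The `n`-th level stabiliser `St_{G_ω}(n)` seen as a subgroup of `G_ω`. -/
def stab (ω : Seq) (n : ℕ) : Subgroup ↥(G ω) := (levelStab n).subgroupOf (G ω)

lemma aMap_length (w : List Bool) : (aMap w).length = w.length := by
  cases w <;> simp [aMap]

lemma genMap_length (k : Fin 3) :
    ∀ (w : List Bool) (ω : Seq), (genMap k ω w).length = w.length := by
  intro w
  induction w with
  | nil => intro ω; rfl
  | cons x w ih =>
      intro ω
      cases x with
      | false => by_cases h : ω 0 = k <;> simp [genMap, h, aMap_length]
      | true => simp [genMap, ih]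

/-- The subgroup of length-preserving permutations of the set of words. -/
def lenPres : Subgroup (Equiv.Perm (List Bool)) where
  carrier := {f | ∀ w : List Bool, (f w).length = w.length}
  one_mem' := by intro w; rfl
  mul_mem' := by
    intro f g hf hg w
    rw [Equiv.Perm.mul_apply, hf, hg]
  inv_mem' := by
    intro f hf w
    conv_rhs => rw [← f.apply_symm_apply w]
    rw [hf]; rfl

lemma G_le_lenPres (ω : Seq) : G ω ≤ lenPres := by
  rw [G]
  refine (Subgroup.closure_le _).2 ?_
  intro x hx
  simp only [Set.mem_insert_iff, Set.mem_singleton_iff] at hx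
  rcases hx with rfl | rfl | rfl | rfl
  · exact fun w => aMap_length w
  · exact fun w => genMap_length 2 w ω
  · exact fun w => genMap_length 1 w ω
  · exact fun w => genMap_length 0 w ω

instance stab_normal (ω : Seq) (n : ℕ) : (stab ω n).Normal := by
  constructor
  intro h hh g
  simp only [stab, Subgroup.mem_subgroupOf] at hh ⊢
  intro w hw
  have hginv : ((g : Equiv.Perm (List Bool))⁻¹ w).length = n := by
    rw [G_le_lenPres ω ((G ω).inv_mem g.2) w, hw]
  have : ((h : Equiv.Perm (List Bool))) ((g : Equiv.Perm (List Bool))⁻¹ w)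
      = (g : Equiv.Perm (List Bool))⁻¹ w := hh _ hginv
  simp only [Subgroup.coe_mul, InvMemClass.coe_inv, Equiv.Perm.mul_apply]
  rw [this]; exact (g : Equiv.Perm (List Bool)).apply_symm_apply w

/-- A (spherical) system of generators of a group. -/
def SphericalSystem {Q : Type*} [Group Q] {r : ℕ} (T : Fin r → Q) : Prop :=
  3 ≤ r ∧ (∀ i, T i ≠ 1) ∧ Subgroup.closure (Set.range T) = ⊤ ∧ (List.ofFn T).prod = 1

/-- The set Σ(T): the union of all conjugates of the cyclic subgroups generated by
the entries of `T`. -/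
def SigmaSet {Q : Type*} [Group Q] {r : ℕ} (T : Fin r → Q) : Set Q :=
  ⋃ (g : Q) (i : Fin r), (fun x => g⁻¹ * x * g) '' (Subgroup.zpowers (T i) : Set Q)

/-- An (unmixed) ramification structure of size `(r₁, r₂)` for a group `Q`. -/
def HasRamificationStructure (Q : Type*) [Group Q] (r₁ r₂ : ℕ) : Prop :=
  ∃ (T₁ : Fin r₁ → Q) (T₂ : Fin r₂ → Q),
    SphericalSystem T₁ ∧ SphericalSystem T₂ ∧ SigmaSet T₁ ∩ SigmaSet T₂ = {1}

/-- `i_k(ω) = min {n ≥ 1 : ω_n = k}` (meaningful when some entry of ω equals `k`;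
with our 0-indexing this is `sInf {n | ω n = k} + 1`). -/
noncomputable def ikFin (k : Fin 3) (ω : Seq) : ℕ := sInf {n | ω n = k} + 1

/-- `m(ω) = max {n ≥ 1 : ω_1 = ⋯ = ω_n}` for a non-constant sequence ω;
with our 0-indexing this is the least index where ω differs from ω 0. -/
noncomputable def mval (ω : Seq) : ℕ := sInf {n | ω n ≠ ω 0}


/-- The normal closure of the element `x` relative to the subgroup `H`:
the subgroup generated by all `H`-conjugates of `x`. -/
def nclIn (H : Subgroup (Equiv.Perm (List Bool))) (x : Equiv.Perm (List Bool)) :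
    Subgroup (Equiv.Perm (List Bool)) :=
  Subgroup.closure {y | ∃ g ∈ H, y = g * x * g⁻¹}

/-- The `d`-generator of `G_ω`: `d_ω` if ω₁ = 0, `c_ω` if ω₁ = 1 and `b_ω` if ω₁ = 2;
with our encoding this is simply `genPerm (ω 0) ω`. -/
def dGenPerm (ω : Seq) : Equiv.Perm (List Bool) := genPerm (ω 0) ω

/-- The subgroup of permutations fixing every word that does not have `u` as a prefix. -/
def awayStab (u : List Bool) : Subgroup (Equiv.Perm (List Bool)) where
  carrier := {f | ∀ w : List Bool, ¬ u <+: w → f w = w}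
  one_mem' := by intro w _; rfl
  mul_mem' := by
    intro f g hf hg w hw
    rw [Equiv.Perm.mul_apply, hg w hw, hf w hw]
  inv_mem' := by
    intro f hf w hw
    calc f⁻¹ w = f⁻¹ (f w) := by rw [hf w hw]
    _ = w := f.symm_apply_apply w

/-- The rigid vertex stabiliser `Rist_{G_ω}(u)`. -/
def Rist (ω : Seq) (u : List Bool) : Subgroup (Equiv.Perm (List Bool)) :=
  G ω ⊓ awayStab u

/-- The section map φ_u : for an automorphism `f` fixing the vertex `u`, the value
`sectionFun u f` is the section of `f` at `u` (as a map on words). -/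
def sectionFun (u : List Bool) (f : Equiv.Perm (List Bool)) : List Bool → List Bool :=
  fun v => (f (u ++ v)).drop u.length

/-- The `d`-generator `x_ω` of `G_ω`, as an element of `G_ω`. -/
def xGen (ω : Seq) : ↥(G ω) :=
  if ω 0 = 0 then ⟨d ω, Subgroup.subset_closure (by simp)⟩
  else if ω 0 = 1 then ⟨c ω, Subgroup.subset_closure (by simp)⟩
  else ⟨b ω, Subgroup.subset_closure (by simp)⟩

/-- The `c`-generator `y_ω` of `G_ω` (determined by ω_{m(ω)+1}), as an element of `G_ω`. -/
noncomputable def yGen (ω : Seq) : ↥(G ω) :=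
  if ω (mval ω) = 0 then ⟨d ω, Subgroup.subset_closure (by simp)⟩
  else if ω (mval ω) = 1 then ⟨c ω, Subgroup.subset_closure (by simp)⟩
  else ⟨b ω, Subgroup.subset_closure (by simp)⟩

open scoped Classical in
/-- The bound `M` of the main theorem. -/
noncomputable def Mval (ω : Seq) : ℕ :=
  if ∀ k : Fin 3, ∃ n, shift ω n = k then
    (Finset.univ.sup fun k : Fin 3 => ikFin k (shift ω)) + 4
  else if ∀ n, shift ω n = shift ω 0 then 4
  else ((Finset.univ.filter fun k : Fin 3 => ∃ n, shift ω n = k).sup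
          fun k => ikFin k (shift ω)) + 4


end Grig

namespace Grig

/-! ### Auxiliary machinery -/

def pairMap (p q : List Bool → List Bool) : List Bool → List Bool
  | [] => []
  | false :: w => false :: p w
  | true :: w => true :: q w

lemma pairMap_comp (p q p' q' : List Bool → List Bool) (w : List Bool) :
    pairMap p q (pairMap p' q' w) = pairMap (fun v => p (p' v)) (fun v => q (q' v)) w := by
  rcases w with _ | ⟨x, w⟩
  · rfl
  · cases x <;> rfl

def pairPerm (p q : Equiv.Perm (List Bool)) : Equiv.Perm (List Bool) :=
  ⟨pairMap p q, pairMap p.symm q.symm, by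
    intro w; rw [pairMap_comp]; rcases w with _ | ⟨x, w⟩
    · rfl
    · cases x <;> simp [pairMap], by
    intro w; rw [pairMap_comp]; rcases w with _ | ⟨x, w⟩
    · rfl
    · cases x <;> simp [pairMap]⟩

lemma pairPerm_apply (p q : Equiv.Perm (List Bool)) (w : List Bool) :
    pairPerm p q w = pairMap p q w := rfl

lemma pair_mul (p q p' q' : Equiv.Perm (List Bool)) :
    pairPerm p q * pairPerm p' q' = pairPerm (p * p') (q * q') := by
  ext w
  simp only [Equiv.Perm.mul_apply, pairPerm_apply, pairMap_comp]
  rfl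

lemma pair_one : pairPerm 1 1 = 1 := by
  ext w
  rcases w with _ | ⟨x, w⟩
  · rfl
  · cases x <;> rfl

/-- `pairPerm` as a monoid hom from the product group. -/
def pairHom : Equiv.Perm (List Bool) × Equiv.Perm (List Bool) →* Equiv.Perm (List Bool) where
  toFun x := pairPerm x.1 x.2
  map_one' := pair_one
  map_mul' x y := (pair_mul _ _ _ _).symm

lemma pairHom_injective : Function.Injective pairHom := by
  intro ⟨p, q⟩ ⟨p', q'⟩ hpq
  have h1 : ∀ w, pairPerm p q w = pairPerm p' q' w := fun w => by
    rw [show pairPerm p q = pairHom (p, q) from rfl, hpq]; rfl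
  have hp : p = p' := Equiv.ext fun w => by
    have := h1 (false :: w)
    simpa [pairPerm_apply, pairMap] using this
  have hq : q = q' := Equiv.ext fun w => by
    have := h1 (true :: w)
    simpa [pairPerm_apply, pairMap] using this
  simp [hp, hq]

lemma orderOf_pair (p q : Equiv.Perm (List Bool)) :
    orderOf (pairPerm p q) = Nat.lcm (orderOf p) (orderOf q) := by
  have : pairPerm p q = pairHom (p, q) := rfl
  rw [this, orderOf_injective pairHom pairHom_injective, Prod.orderOf]

lemma pair_pow (p q : Equiv.Perm (List Bool)) (n : ℕ) :
    (pairPerm p q) ^ n = pairPerm (p ^ n) (q ^ n) := by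
  have : pairPerm p q = pairHom (p, q) := rfl
  rw [this, ← map_pow]; rfl

lemma a_pair_a (p q : Equiv.Perm (List Bool)) :
    aPerm * pairPerm p q * aPerm = pairPerm q p := by
  ext w
  rcases w with _ | ⟨x, w⟩
  · rfl
  · cases x <;> rfl

lemma genPerm_decomp (k : Fin 3) (ω : Seq) :
    genPerm k ω = pairPerm (if ω 0 = k then 1 else aPerm) (genPerm k (shift ω)) := by
  ext w
  rcases w with _ | ⟨x, w⟩
  · rfl
  · cases x
    · by_cases h : ω 0 = k <;> simp [genPerm, genMap, h, pairPerm_apply, pairMap, aPerm, Equiv.coe_fn_mk]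
    · simp [genPerm, genMap, pairPerm_apply, pairMap]

lemma aPerm_sq : aPerm * aPerm = 1 := by
  ext w; simp [aPerm, Equiv.Perm.mul_apply, aMap_invol]

lemma aPerm_inv : aPerm⁻¹ = aPerm := inv_eq_of_mul_eq_one_right aPerm_sq

lemma genPerm_sq (k : Fin 3) (ω : Seq) : genPerm k ω * genPerm k ω = 1 := by
  ext w; simp [genPerm, Equiv.Perm.mul_apply, genMap_invol]

lemma genPerm_inv (k : Fin 3) (ω : Seq) : (genPerm k ω)⁻¹ = genPerm k ω :=
  inv_eq_of_mul_eq_one_right (genPerm_sq k ω)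

lemma genMap_fix_false (k : Fin 3) (ω : Seq) : genMap k ω [false] = [false] := by
  by_cases h : ω 0 = k <;> simp [genMap, h, aMap]

lemma a_genPerm_ne_one (k : Fin 3) (ω : Seq) : aPerm * genPerm k ω ≠ 1 := by
  intro hc
  have : (aPerm * genPerm k ω) [false] = [false] := by rw [hc]; rfl
  rw [Equiv.Perm.mul_apply] at this
  have h2 : (genPerm k ω) [false] = [false] := genMap_fix_false k ω
  rw [h2] at this
  simp [aPerm, aMap] at this

lemma genMap_replicate (k : Fin 3) :
    ∀ (m : ℕ) (ω : Seq) (w : List Bool),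
      genMap k ω (List.replicate m true ++ false :: w) =
        List.replicate m true ++ false :: (if ω m = k then w else aMap w) := by
  intro m
  induction m with
  | zero => intro ω w; simp [genMap]
  | succ n ih =>
      intro ω w
      rw [List.replicate_succ, List.cons_append]
      show genMap k ω (true :: (List.replicate n true ++ false :: w)) = _
      rw [show genMap k ω (true :: (List.replicate n true ++ false :: w))
            = true :: genMap k (shift ω) (List.replicate n true ++ false :: w) from rfl,
        ih (shift ω) w]
      rfl

lemma genPerm_ne_one (k : Fin 3) (ω : Seq) (m : ℕ) (hm : ω m ≠ k) : genPerm k ω ≠ 1 := by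
  intro hc
  have h2 : genPerm k ω (List.replicate m true ++ [false, false]) =
      List.replicate m true ++ false :: aMap [false] := by
    show genMap k ω _ = _
    rw [genMap_replicate k m ω [false], if_neg hm]
  rw [hc] at h2
  simp [aMap] at h2

lemma orderOf_genPerm_eq_two (k : Fin 3) (ω : Seq) (m : ℕ) (hm : ω m ≠ k) :
    orderOf (genPerm k ω) = 2 :=
  orderOf_eq_prime (by rw [sq]; exact genPerm_sq k ω) (genPerm_ne_one k ω m hm)

lemma a_gen_sq (k : Fin 3) (ω : Seq) :
    (aPerm * genPerm k ω) ^ 2 =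
      pairPerm (genPerm k (shift ω) * (if ω 0 = k then 1 else aPerm))
        ((if ω 0 = k then 1 else aPerm) * genPerm k (shift ω)) := by
  rw [sq, show aPerm * genPerm k ω * (aPerm * genPerm k ω)
      = aPerm * genPerm k ω * aPerm * genPerm k ω by group,
    genPerm_decomp k ω, a_pair_a, pair_mul]

lemma a_gen_pow_two_pow (k : Fin 3) :
    ∀ (m : ℕ) (ω : Seq), ω m = k → (aPerm * genPerm k ω) ^ (2 ^ (m + 2)) = 1 := by
  intro m
  induction m with
  | zero =>
      intro ω h0
      have : (2 : ℕ) ^ 2 = 2 * 2 := by norm_num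
      rw [this, pow_mul, a_gen_sq, if_pos h0, mul_one, one_mul, pair_pow, sq,
        genPerm_sq, pair_one]
  | succ n ih =>
      intro ω h0
      have hih := ih (shift ω) h0
      have hstep : (2 : ℕ) ^ (n + 1 + 2) = 2 * 2 ^ (n + 2) := by ring
      rw [hstep, pow_mul, a_gen_sq, pair_pow]
      have hleft : (genPerm k (shift ω) * (if ω 0 = k then 1 else aPerm)) ^ (2 ^ (n + 2)) = 1 := by
        by_cases h : ω 0 = k
        · rw [if_pos h, mul_one, show (2:ℕ) ^ (n+2) = 2 * 2 ^ (n+1) by ring, pow_mul, sq,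
            genPerm_sq, one_pow]
        · rw [if_neg h]
          have hinv : genPerm k (shift ω) * aPerm = (aPerm * genPerm k (shift ω))⁻¹ := by
            rw [mul_inv_rev, aPerm_inv, genPerm_inv]
          rw [hinv, inv_pow, hih, inv_one]
      have hright : ((if ω 0 = k then 1 else aPerm) * genPerm k (shift ω)) ^ (2 ^ (n + 2)) = 1 := by
        by_cases h : ω 0 = k
        · rw [if_pos h, one_mul, show (2:ℕ) ^ (n+2) = 2 * 2 ^ (n+1) by ring, pow_mul, sq,
            genPerm_sq, one_pow]
        · rw [if_neg h, hih]
      rw [hleft, hright, pair_one]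

lemma orderOf_a_gen_pow2 (k : Fin 3) (ω : Seq) (m : ℕ) (hm : ω m = k) :
    ∃ j : ℕ, 1 ≤ j ∧ orderOf (aPerm * genPerm k ω) = 2 ^ j := by
  have hdvd : orderOf (aPerm * genPerm k ω) ∣ 2 ^ (m + 2) :=
    orderOf_dvd_of_pow_eq_one (a_gen_pow_two_pow k m ω hm)
  obtain ⟨j, _, hj⟩ := (Nat.dvd_prime_pow Nat.prime_two).1 hdvd
  refine ⟨j, ?_, hj⟩
  rcases Nat.eq_zero_or_pos j with rfl | hpos
  · exfalso
    exact a_genPerm_ne_one k ω (orderOf_eq_one_iff.1 (by simpa using hj))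
  · exact hpos

lemma orderOf_gen_a (k : Fin 3) (ω : Seq) :
    orderOf (genPerm k ω * aPerm) = orderOf (aPerm * genPerm k ω) := by
  have : genPerm k ω * aPerm = (aPerm * genPerm k ω)⁻¹ := by
    rw [mul_inv_rev, aPerm_inv, genPerm_inv]
  rw [this, orderOf_inv]

lemma lcm_two_pow (i j : ℕ) : Nat.lcm (2 ^ i) (2 ^ j) = max (2 ^ i) (2 ^ j) := by
  have key : ∀ a b : ℕ, a ∣ b → Nat.lcm a b = b := fun a b h =>
    Nat.dvd_antisymm (Nat.lcm_dvd h dvd_rfl) (Nat.dvd_lcm_right a b)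
  rcases le_total i j with hle | hle
  · rw [max_eq_right (Nat.pow_le_pow_right (by norm_num) hle)]
    exact key _ _ (pow_dvd_pow 2 hle)
  · rw [max_eq_left (Nat.pow_le_pow_right (by norm_num) hle)]
    rw [Nat.lcm_comm]
    exact key _ _ (pow_dvd_pow 2 hle)

end Grig

namespace Grig

/-- If all of `i_0(ω), i_1(ω), i_2(ω), i_0(σω), i_1(σω), i_2(σω)`
are finite, then `o(a d_ω a c_ω) = o(a c_ω a d_ω)`, and this common order equals
`o(a d_{σω})` if ω₁ = 0, `o(a c_{σω})` if ω₁ = 1, and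
`max{o(a d_{σω}), o(a c_{σω})}` if ω₁ = 2. -/
theorem orderOf_adac (ω : Seq) (h : ∀ k : Fin 3, ∃ m, ω m = k)
    (h' : ∀ k : Fin 3, ∃ m, shift ω m = k) :
    orderOf (aPerm * d ω * aPerm * c ω) = orderOf (aPerm * c ω * aPerm * d ω) ∧
    orderOf (aPerm * d ω * aPerm * c ω) =
      if ω 0 = 0 then orderOf (aPerm * d (shift ω))
      else if ω 0 = 1 then orderOf (aPerm * c (shift ω))
      else max (orderOf (aPerm * d (shift ω))) (orderOf (aPerm * c (shift ω))) := by
  set d' := genPerm 0 (shift ω) with hd'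
  set c' := genPerm 1 (shift ω) with hc'
  set d₀ : Equiv.Perm (List Bool) := if ω 0 = 0 then 1 else aPerm with hd₀
  set c₀ : Equiv.Perm (List Bool) := if ω 0 = 1 then 1 else aPerm with hc₀
  have hx : aPerm * d ω * aPerm * c ω = pairPerm (d' * c₀) (d₀ * c') := by
    rw [show d ω = genPerm 0 ω from rfl, show c ω = genPerm 1 ω from rfl,
      genPerm_decomp 0 ω, genPerm_decomp 1 ω, a_pair_a, pair_mul]
  have hy : aPerm * c ω * aPerm * d ω = pairPerm (c' * d₀) (c₀ * d') := by
    rw [show d ω = genPerm 0 ω from rfl, show c ω = genPerm 1 ω from rfl,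
      genPerm_decomp 0 ω, genPerm_decomp 1 ω, a_pair_a, pair_mul]
  have hd₀inv : d₀⁻¹ = d₀ := by
    rw [hd₀]; split <;> simp [aPerm_inv]
  have hc₀inv : c₀⁻¹ = c₀ := by
    rw [hc₀]; split <;> simp [aPerm_inv]
  have h1 : orderOf (d' * c₀) = orderOf (c₀ * d') := by
    rw [← orderOf_inv (c₀ * d'), mul_inv_rev, hc₀inv, genPerm_inv]
  have h2 : orderOf (d₀ * c') = orderOf (c' * d₀) := by
    rw [← orderOf_inv (c' * d₀), mul_inv_rev, hd₀inv, genPerm_inv]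
  constructor
  · rw [hx, hy, orderOf_pair, orderOf_pair, h1, h2, Nat.lcm_comm]
  · obtain ⟨m0, hm0⟩ := h' 0
    obtain ⟨m1, hm1⟩ := h' 1
    obtain ⟨jd, hjd1, hjd⟩ := orderOf_a_gen_pow2 0 (shift ω) m0 hm0
    obtain ⟨jc, hjc1, hjc⟩ := orderOf_a_gen_pow2 1 (shift ω) m1 hm1
    have hdd : d (shift ω) = d' := rfl
    have hcc : c (shift ω) = c' := rfl
    by_cases h0 : ω 0 = 0
    · have hne1 : ¬ ω 0 = 1 := by rw [h0]; decide
      rw [if_pos h0, hx, hd₀, hc₀, if_pos h0, if_neg hne1, one_mul, orderOf_pair,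
        orderOf_gen_a 0 (shift ω), hdd]
      have hoc : orderOf c' = 2 :=
        orderOf_genPerm_eq_two 1 (shift ω) m0 (by rw [hm0]; decide)
      have hl : Nat.lcm (2 ^ jd) 2 = 2 ^ jd := by
        have h2le : (2 : ℕ) ≤ 2 ^ jd := by
          calc (2 : ℕ) = 2 ^ 1 := (pow_one 2).symm
          _ ≤ 2 ^ jd := Nat.pow_le_pow_right (by norm_num) hjd1
        have := lcm_two_pow jd 1
        rw [pow_one] at this
        rw [this, max_eq_left h2le]
      rw [hoc, show orderOf (aPerm * d') = 2 ^ jd from hjd, hl, ← hjd]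
    · by_cases hh1 : ω 0 = 1
      · rw [if_neg h0, if_pos hh1, hx, hd₀, hc₀, if_pos hh1, if_neg h0, mul_one, orderOf_pair, hcc]
        have hod : orderOf d' = 2 :=
          orderOf_genPerm_eq_two 0 (shift ω) m1 (by rw [hm1]; decide)
        have hl : Nat.lcm 2 (2 ^ jc) = 2 ^ jc := by
          have h2le : (2 : ℕ) ≤ 2 ^ jc := by
            calc (2 : ℕ) = 2 ^ 1 := (pow_one 2).symm
            _ ≤ 2 ^ jc := Nat.pow_le_pow_right (by norm_num) hjc1
          have := lcm_two_pow 1 jc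
          rw [pow_one] at this
          rw [this, max_eq_right h2le]
        rw [hod, show orderOf (aPerm * c') = 2 ^ jc from hjc, hl, ← hjc]
      · rw [if_neg h0, if_neg hh1, hx, hd₀, hc₀, if_neg h0, if_neg hh1, orderOf_pair,
          orderOf_gen_a 0 (shift ω), hdd, hcc,
          show orderOf (aPerm * d') = 2 ^ jd from hjd,
          show orderOf (aPerm * c') = 2 ^ jc from hjc, lcm_two_pow, ← hjd, ← hjc]

end Grig
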